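/- Let n ≥ 1, let M₁, M₃ be positive semidefinite symmetric real n×n matrices, and let Δ, Δ' be any positive semidefinite symmetric n×n matrices satisfying M₁ + Δ' = M₃ + Δ. Then δ(M₁, M₃) ≤ (1/n)·trace(Δ + Δ'), where δ(M₁, M₃) := 2·min{(1/n)trace(M) : M symmetric, M ≥ M₁, M ≥ M₃} − (1/n)(trace(M₁) + trace(M₃)). -/

import Mathlib

open Matrix

/-- `τ(M₁, M₂)`: the minimal normalized trace of a symmetric matrix dominating
both `M₁` and `M₂` in the Loewner order. -/
noncomputable def tau (n : ℕ) (M₁ M₂ : Matrix (Fin n) (Fin n) ℝ) : ℝ :=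
  sInf {x : ℝ | ∃ M : Matrix (Fin n) (Fin n) ℝ,
    M.IsHermitian ∧ (M - M₁).PosSemidef ∧ (M - M₂).PosSemidef ∧
    x = (n : ℝ)⁻¹ * M.trace}

/-- `δ(M₁, M₂) := 2τ(M₁, M₂) - (1/n)(trace M₁ + trace M₂)`. -/
noncomputable def delta (n : ℕ) (M₁ M₂ : Matrix (Fin n) (Fin n) ℝ) : ℝ :=
  2 * tau n M₁ M₂ - (n : ℝ)⁻¹ * (M₁.trace + M₂.trace)

lemma psd_trace_nonneg {n : ℕ} {A : Matrix (Fin n) (Fin n) ℝ} (hA : A.PosSemidef) :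
    0 ≤ A.trace := by
  have h : ∀ i, 0 ≤ A i i := by
    intro i
    have := hA.2 (Finsupp.single i 1)
    simpa using this
  exact Finset.sum_nonneg fun i _ => h i

/-- Key minimality step: any positive semidefinite perturbations `Δ, Δ'` with
`M₁ + Δ' = M₃ + Δ` give an upper bound `(1/n)·trace(Δ + Δ')` on `δ(M₁, M₃)`. -/
theorem delta_le_trace_of_reconciling_perturbations
    (n : ℕ) (hn : 1 ≤ n) (M₁ M₃ Δ Δ' : Matrix (Fin n) (Fin n) ℝ)
    (h₁ : M₁.PosSemidef) (h₃ : M₃.PosSemidef)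
    (hΔ : Δ.PosSemidef) (hΔ' : Δ'.PosSemidef)
    (hbal : M₁ + Δ' = M₃ + Δ) :
    delta n M₁ M₃ ≤ (n : ℝ)⁻¹ * (Δ + Δ').trace := by
  have hnpos : (0 : ℝ) < (n : ℝ) := by exact_mod_cast hn
  have hninv : (0 : ℝ) ≤ (n : ℝ)⁻¹ := by positivity
  set S := {x : ℝ | ∃ M : Matrix (Fin n) (Fin n) ℝ,
    M.IsHermitian ∧ (M - M₁).PosSemidef ∧ (M - M₃).PosSemidef ∧
    x = (n : ℝ)⁻¹ * M.trace} with hS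
  have hmem : (n : ℝ)⁻¹ * (M₁ + Δ').trace ∈ S := by
    refine ⟨M₁ + Δ', (h₁.1.add hΔ'.1), ?_, ?_, rfl⟩
    · simpa using hΔ'
    · rw [hbal]; simpa using hΔ
  have hbdd : BddBelow S := by
    refine ⟨(n : ℝ)⁻¹ * M₁.trace, ?_⟩
    rintro x ⟨M, hM, hM1, hM3, rfl⟩
    have := psd_trace_nonneg hM1
    rw [Matrix.trace_sub] at this
    have := mul_le_mul_of_nonneg_left (by linarith : M₁.trace ≤ M.trace) hninv
    linarith
  have htau : tau n M₁ M₃ ≤ (n : ℝ)⁻¹ * (M₁ + Δ').trace := csInf_le hbdd hmem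
  have htr : M₁.trace + Δ'.trace = M₃.trace + Δ.trace := by
    have := congrArg Matrix.trace hbal
    simpa [Matrix.trace_add] using this
  rw [delta]
  rw [Matrix.trace_add] at htau ⊢
  nlinarith [htau, htr]
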